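/- Every D3-reducible graph is planar. -/

import Mathlib

/-- A finite graph on a subset of `ℕ`, allowing vertex-set changes under reductions. -/
structure FinGraph where
  verts : Finset ℕ
  Adj : ℕ → ℕ → Prop
  symm : ∀ u v, Adj u v → Adj v u
  loopless : ∀ u, ¬ Adj u u
  support : ∀ u v, Adj u v → u ∈ verts ∧ v ∈ verts

namespace FinGraph

def neighborSet (G : FinGraph) (v : ℕ) : Set ℕ := {u | G.Adj v u}

/-- The degree of a vertex. -/
noncomputable def degree (G : FinGraph) (v : ℕ) : ℕ := (G.neighborSet v).ncard

/-- Reachability by a walk staying inside the set `S`. -/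
def ReachableWithin (G : FinGraph) (S : Set ℕ) (u v : ℕ) : Prop :=
  Relation.ReflTransGen (fun a b => G.Adj a b ∧ a ∈ S ∧ b ∈ S) u v

/-- The subgraph induced on `S` is connected. -/
def ConnectedOn (G : FinGraph) (S : Set ℕ) : Prop :=
  ∀ u ∈ S, ∀ v ∈ S, G.ReachableWithin S u v

def Connected (G : FinGraph) : Prop := G.ConnectedOn ↑G.verts

/-- 3-vertex-connectivity: more than three vertices, and connected after deleting
any two vertices. -/
def ThreeConnected (G : FinGraph) : Prop :=
  3 < G.verts.card ∧ ∀ x y : ℕ, G.ConnectedOn (↑G.verts \ {x, y})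

/-- Graph isomorphism. -/
def Iso (G H : FinGraph) : Prop :=
  ∃ f : ℕ → ℕ, Set.BijOn f ↑G.verts ↑H.verts ∧
    ∀ u ∈ G.verts, ∀ v ∈ G.verts, (G.Adj u v ↔ H.Adj (f u) (f v))

/-- The configuration for a D3a reduction: a triangle `p q r` of degree-three
vertices whose outside neighbors `p' q' r'` are three distinct vertices. -/
def D3aConfig (G : FinGraph) (p q r p' q' r' : ℕ) : Prop :=
  G.degree p = 3 ∧ G.degree q = 3 ∧ G.degree r = 3 ∧
  G.Adj p q ∧ G.Adj q r ∧ G.Adj p r ∧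
  G.Adj p p' ∧ G.Adj q q' ∧ G.Adj r r' ∧
  p' ∉ ({p, q, r} : Set ℕ) ∧ q' ∉ ({p, q, r} : Set ℕ) ∧ r' ∉ ({p, q, r} : Set ℕ) ∧
  p' ≠ q' ∧ p' ≠ r' ∧ q' ≠ r'

/-- A D3a reduction from `G` to `H`: collapse such a triangle to a new vertex `t`. -/
def D3a (G H : FinGraph) : Prop :=
  ∃ p q r p' q' r' t, G.D3aConfig p q r p' q' r' ∧ t ∉ G.verts ∧
    H.verts = (G.verts \ {p, q, r}) ∪ {t} ∧
    ∀ a b, H.Adj a b ↔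
      (G.Adj a b ∧ a ∉ ({p, q, r} : Set ℕ) ∧ b ∉ ({p, q, r} : Set ℕ)) ∨
      (a = t ∧ b ∈ ({p', q', r'} : Set ℕ)) ∨
      (b = t ∧ a ∈ ({p', q', r'} : Set ℕ))

/-- The configuration for a D3b reduction: an induced path `p q r` of degree-three
vertices, all adjacent to a common apex `s`. -/
def D3bConfig (G : FinGraph) (p q r s : ℕ) : Prop :=
  G.degree p = 3 ∧ G.degree q = 3 ∧ G.degree r = 3 ∧
  G.Adj p q ∧ G.Adj q r ∧ ¬ G.Adj p r ∧ p ≠ r ∧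
  G.Adj s p ∧ G.Adj s q ∧ G.Adj s r

/-- A D3b reduction from `G` to `H`: delete the middle vertex `q` and add edge `pr`. -/
def D3b (G H : FinGraph) : Prop :=
  ∃ p q r s, G.D3bConfig p q r s ∧
    H.verts = G.verts \ {q} ∧
    ∀ a b, H.Adj a b ↔
      (G.Adj a b ∧ a ≠ q ∧ b ≠ q) ∨ (a = p ∧ b = r) ∨ (a = r ∧ b = p)

/-- A single D3 reduction. -/
def D3Step (G H : FinGraph) : Prop := G.D3a H ∨ G.D3b H

/-- `G` is a complete graph on four vertices. -/
def IsK4 (G : FinGraph) : Prop :=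
  G.verts.card = 4 ∧ ∀ u ∈ G.verts, ∀ v ∈ G.verts, u ≠ v → G.Adj u v

/-- A graph is D3-reducible if some sequence of D3 reductions takes it to `K₄`. -/
def D3Reducible (G : FinGraph) : Prop :=
  ∃ H, Relation.ReflTransGen D3Step G H ∧ H.IsK4

/-- No D3 reduction applies. -/
def Irreducible (G : FinGraph) : Prop := ¬ ∃ H, G.D3Step H

/-- `H` is a minor of `G`, witnessed by connected, disjoint branch sets. -/
def HasMinor (G H : FinGraph) : Prop :=
  ∃ B : ℕ → Finset ℕ,
    (∀ v ∈ H.verts, (B v).Nonempty ∧ ↑(B v) ⊆ (↑G.verts : Set ℕ) ∧ G.ConnectedOn ↑(B v)) ∧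
    (∀ u ∈ H.verts, ∀ v ∈ H.verts, u ≠ v → Disjoint (B u) (B v)) ∧
    (∀ u v, H.Adj u v → ∃ a ∈ B u, ∃ b ∈ B v, G.Adj a b)

def K5Graph : FinGraph where
  verts := Finset.range 5
  Adj a b := a ≠ b ∧ a < 5 ∧ b < 5
  symm := fun _ _ h => ⟨Ne.symm h.1, h.2.2, h.2.1⟩
  loopless := fun _ h => h.1 rfl
  support := fun _ _ h => ⟨Finset.mem_range.2 h.2.1, Finset.mem_range.2 h.2.2⟩

def K33Graph : FinGraph where
  verts := Finset.range 6
  Adj a b := (a < 3 ∧ 3 ≤ b ∧ b < 6) ∨ (b < 3 ∧ 3 ≤ a ∧ a < 6)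
  symm := fun _ _ h => h.elim Or.inr Or.inl
  loopless := by intro u h; rcases h with ⟨h1, h2, _⟩ | ⟨h1, h2, _⟩ <;> omega
  support := by
    intro u v h
    constructor <;> rw [Finset.mem_range] <;>
      rcases h with ⟨h1, h2, h3⟩ | ⟨h1, h2, h3⟩ <;> omega

/-- Planarity, via Wagner's characterization: no `K₅` and no `K₃,₃` minor. -/
def Planar (G : FinGraph) : Prop := ¬ G.HasMinor K5Graph ∧ ¬ G.HasMinor K33Graph

/-- `T` is a tree: nonempty, connected, and every edge is a bridge (acyclicity). -/
def IsTreeGraph (T : FinGraph) : Prop :=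
  T.verts.Nonempty ∧ T.Connected ∧
  ∀ u v, T.Adj u v → ¬ Relation.ReflTransGen
    (fun a b => T.Adj a b ∧ ¬(a = u ∧ b = v) ∧ ¬(a = v ∧ b = u)) u v

def IsLeaf (T : FinGraph) (v : ℕ) : Prop := T.degree v = 1

/-- The edges of `G` not in the spanning tree `T` (the candidate cycle edges). -/
def cycleAdj (G T : FinGraph) (a b : ℕ) : Prop := G.Adj a b ∧ ¬ T.Adj a b

/-- `G` is a Halin graph with underlying tree `T`: `T` is a spanning tree with at
least four vertices and no degree-two vertex, the non-tree edges form a single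
cycle passing exactly through the leaves of `T`, and `G` is planar (which forces
the cycle to traverse the leaves in the cyclic order of a planar embedding of `T`). -/
def IsHalinVia (G T : FinGraph) : Prop :=
  IsTreeGraph T ∧ T.verts = G.verts ∧ 4 ≤ T.verts.card ∧
  (∀ v ∈ T.verts, T.degree v ≠ 2) ∧
  (∀ a b, T.Adj a b → G.Adj a b) ∧
  (∀ a b, cycleAdj G T a b → T.IsLeaf a ∧ T.IsLeaf b) ∧
  (∀ v ∈ G.verts, T.IsLeaf v → {u | cycleAdj G T v u}.ncard = 2) ∧
  (∀ u v, u ∈ G.verts → v ∈ G.verts → T.IsLeaf u → T.IsLeaf v →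
    Relation.ReflTransGen (cycleAdj G T) u v) ∧
  G.Planar

def IsHalin (G : FinGraph) : Prop := ∃ T, IsHalinVia G T

/-- Treewidth at most `k`, via tree decompositions. -/
def TreewidthLE (G : FinGraph) (k : ℕ) : Prop :=
  ∃ (ι : Type) (T : SimpleGraph ι) (bag : ι → Finset ℕ),
    T.IsTree ∧
    (∀ v ∈ G.verts, ∃ i, v ∈ bag i) ∧
    (∀ u v, G.Adj u v → ∃ i, u ∈ bag i ∧ v ∈ bag i) ∧
    (∀ (v : ℕ) (i j : ι) (p : T.Walk i j), p.IsPath → v ∈ bag i → v ∈ bag j →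
      ∀ m ∈ p.support, v ∈ bag m) ∧
    (∀ i, (bag i).card ≤ k + 1)

/-- A face of a 3-connected planar graph, by Tutte's characterization:
an induced cycle whose complement induces a connected subgraph. -/
def IsFaceCycle (G : FinGraph) (C : Finset ℕ) : Prop :=
  ↑C ⊆ (↑G.verts : Set ℕ) ∧ 3 ≤ C.card ∧
  (∀ v ∈ C, {u | u ∈ C ∧ G.Adj v u}.ncard = 2) ∧
  G.ConnectedOn ↑C ∧
  G.ConnectedOn (↑G.verts \ ↑C)

/-- `D` is the planar dual of the (3-connected planar) graph `G`: its vertices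
correspond bijectively to the faces of `G`, with adjacency for faces sharing an edge. -/
def IsDualOf (D G : FinGraph) : Prop :=
  ∃ F : ℕ → Finset ℕ,
    Set.InjOn F ↑D.verts ∧
    (∀ d ∈ D.verts, IsFaceCycle G (F d)) ∧
    (∀ C, IsFaceCycle G C → ∃ d ∈ D.verts, F d = C) ∧
    (∀ d e, D.Adj d e ↔ d ∈ D.verts ∧ e ∈ D.verts ∧ d ≠ e ∧
      ∃ u v, G.Adj u v ∧ u ∈ F d ∧ v ∈ F d ∧ u ∈ F e ∧ v ∈ F e)

/-- A wheel graph: a hub adjacent to all other vertices, which form a cycle. -/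
def IsWheel (G : FinGraph) : Prop :=
  4 ≤ G.verts.card ∧ ∃ h ∈ G.verts,
    (∀ v ∈ G.verts, v ≠ h → G.Adj h v ∧ G.degree v = 3) ∧
    G.ConnectedOn (↑G.verts \ {h})

/-- Glue the wheel `W` onto `G` along a shared triangular face `{a,b,c}`,
identifying the two faces vertexwise, producing `H`. -/
def GlueStep (G W H : FinGraph) : Prop :=
  ∃ a b c : ℕ, a ≠ b ∧ a ≠ c ∧ b ≠ c ∧
    IsFaceCycle G {a, b, c} ∧ IsFaceCycle W {a, b, c} ∧
    (↑G.verts ∩ ↑W.verts : Set ℕ) = {a, b, c} ∧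
    H.verts = G.verts ∪ W.verts ∧
    (∀ u v, H.Adj u v ↔ G.Adj u v ∨ W.Adj u v)

/-- Graphs constructed by gluing wheels together along triangular faces.
(Each gluing attaches one further wheel along a current triangular face; a glued
face stops being a face, so each face is used at most once, and no graph is
glued to itself.) -/
inductive GluedWheels : FinGraph → Prop
  | base (G : FinGraph) : IsWheel G → GluedWheels G
  | glue (G W H : FinGraph) : GluedWheels G → IsWheel W → GlueStep G W H → GluedWheels H

/-- Delete vertices in `S` from `G`. -/
def removeVerts (G : FinGraph) (S : Finset ℕ) : FinGraph where
  verts := G.verts \ S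
  Adj a b := G.Adj a b ∧ a ∉ S ∧ b ∉ S
  symm := fun u v h => ⟨G.symm u v h.1, h.2.2, h.2.1⟩
  loopless := fun u h => G.loopless u h.1
  support := fun u v h =>
    ⟨Finset.mem_sdiff.2 ⟨(G.support u v h.1).1, h.2.1⟩,
     Finset.mem_sdiff.2 ⟨(G.support u v h.1).2, h.2.2⟩⟩

/-- Delete the edge `uv` from `G`. -/
def deleteEdge (G : FinGraph) (u v : ℕ) : FinGraph where
  verts := G.verts
  Adj a b := G.Adj a b ∧ ¬((a = u ∧ b = v) ∨ (a = v ∧ b = u))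
  symm := fun a b h => ⟨G.symm a b h.1, by tauto⟩
  loopless := fun a h => G.loopless a h.1
  support := fun a b h => G.support a b h.1

end FinGraph

/-!
Planarity is read through Wagner's theorem, so it suffices that a `K₅` or `K₃,₃` minor survives
every D3 reduction `G → H`, since `K₄` is too small to have one.

For D3b, the neighbourhood `{p, r, s}` of the deleted vertex `q` becomes a clique in `H`, so
contracting `q` into a neighbour inside its own branch set gives a model in `H`. Only a branch set
`{q}` needs care: it cannot occur for `K₅`, and for `K₃,₃` the vertex `p` can first be moved into it.

For D3a, collapsing the triangle is a contraction, which keeps a model as long as the triangle meets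
a single branch set. A triangle vertex lying in another branch set is a leaf there (it has degree
three), and can be moved across. The one configuration where this fails is a `K₅` model with the
triangle spread over three branch sets; it contains a `K₃,₃` model with the triangle as a branch set.
-/

namespace FinGraph

variable {G H K : FinGraph}

section Connectivity

lemma ReachableWithin.map {S T : Set ℕ} {f : ℕ → ℕ} (hST : ∀ a ∈ S, f a ∈ T)
    (hf : ∀ a ∈ S, ∀ b ∈ S, G.Adj a b → f a = f b ∨ H.Adj (f a) (f b)) {u v : ℕ}
    (h : G.ReachableWithin S u v) : H.ReachableWithin T (f u) (f v) := by
  induction h with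
  | refl => exact .refl
  | tail _ hbc ih =>
    obtain ⟨hadj, hb, hc⟩ := hbc
    rcases hf _ hb _ hc hadj with heq | hadj'
    · rwa [← heq]
    · exact ih.tail ⟨hadj', hST _ hb, hST _ hc⟩

lemma ReachableWithin.mono {S T : Set ℕ} (hST : S ⊆ T) {u v : ℕ}
    (h : G.ReachableWithin S u v) : G.ReachableWithin T u v :=
  Relation.ReflTransGen.mono (fun _ _ ⟨hadj, ha, hb⟩ => ⟨hadj, hST ha, hST hb⟩) _ _ h

lemma ReachableWithin.symm {S : Set ℕ} {u v : ℕ} (h : G.ReachableWithin S u v) :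
    G.ReachableWithin S v u := by
  induction h with
  | refl => exact .refl
  | tail _ hbc ih => exact .head ⟨G.symm _ _ hbc.1, hbc.2.2, hbc.2.1⟩ ih

lemma ConnectedOn.image {S : Set ℕ} (hS : G.ConnectedOn S) (f : ℕ → ℕ)
    (hf : ∀ a ∈ S, ∀ b ∈ S, G.Adj a b → f a = f b ∨ H.Adj (f a) (f b)) :
    H.ConnectedOn (f '' S) := by
  rintro _ ⟨a, ha, rfl⟩ _ ⟨b, hb, rfl⟩
  exact (hS a ha b hb).map (fun x hx => Set.mem_image_of_mem f hx) hf

lemma ConnectedOn.insert_of_adj {S : Set ℕ} (hS : G.ConnectedOn S) {v u : ℕ} (hu : u ∈ S)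
    (hvu : G.Adj v u) : G.ConnectedOn (insert v S) := by
  have hsub : S ⊆ insert v S := Set.subset_insert v S
  have hv : ∀ x ∈ S, G.ReachableWithin (insert v S) v x := fun x hx =>
    Relation.ReflTransGen.head ⟨hvu, Set.mem_insert v S, hsub hu⟩ ((hS u hu x hx).mono hsub)
  rintro x (rfl | hx) y (rfl | hy)
  · exact .refl
  · exact hv y hy
  · exact (hv x hx).symm
  · exact (hS x hx y hy).mono hsub

lemma ConnectedOn.diff_singleton {S : Set ℕ} (hS : G.ConnectedOn S) {v w : ℕ} (hw : w ∈ S)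
    (hwv : w ≠ v) (hleaf : ∀ x ∈ S, G.Adj v x → x = w) : G.ConnectedOn (S \ {v}) := by
  have himage : (fun x => if x = v then w else x) '' S = S \ {v} := by
    ext x
    constructor
    · rintro ⟨y, hy, rfl⟩
      by_cases h : y = v
      · simpa [h] using And.intro hw hwv
      · simpa [h] using And.intro hy h
    · rintro ⟨hx, hxv⟩
      exact ⟨x, hx, if_neg hxv⟩
  rw [← himage]
  refine hS.image _ fun a ha b hb hab => ?_
  by_cases hav : a = v
  · subst hav
    simp [hleaf b hb hab]
  · by_cases hbv : b = v
    · subst hbv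
      simp [hleaf a ha (G.symm _ _ hab)]
    · simp [hav, hbv, hab]

lemma ConnectedOn.exists_adj {S : Set ℕ} (hS : G.ConnectedOn S) {u x : ℕ} (hu : u ∈ S)
    (hx : x ∈ S) (hne : u ≠ x) : ∃ y ∈ S, G.Adj u y := by
  rcases Relation.ReflTransGen.cases_head (hS u hu x hx) with h | ⟨y, ⟨hadj, _, hy⟩, _⟩
  · exact absurd h hne
  · exact ⟨y, hy, hadj⟩

lemma connectedOn_of_pairwise_adj {S : Set ℕ} (h : ∀ u ∈ S, ∀ v ∈ S, u ≠ v → G.Adj u v) :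
    G.ConnectedOn S := by
  intro u hu v hv
  by_cases huv : u = v
  · exact huv ▸ .refl
  · exact .single ⟨h u hu v hv huv, hu, hv⟩

end Connectivity

section Degree

lemma neighborSet_finite (G : FinGraph) (v : ℕ) : (G.neighborSet v).Finite :=
  G.verts.finite_toSet.subset fun u hu => (G.support v u hu).2

lemma eq_or_eq_or_eq_of_degree_eq_three {v a b c : ℕ} (hd : G.degree v = 3) (hab : a ≠ b)
    (hac : a ≠ c) (hbc : b ≠ c) (ha : G.Adj v a) (hb : G.Adj v b) (hc : G.Adj v c) :
    ∀ u, G.Adj v u → u = a ∨ u = b ∨ u = c := by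
  have hsub : ({a, b, c} : Set ℕ) ⊆ G.neighborSet v := by
    rintro x (rfl | rfl | rfl) <;> assumption
  have hcard : ({a, b, c} : Set ℕ).ncard = 3 := by
    rw [Set.ncard_insert_of_notMem (by simp [hab, hac]), Set.ncard_pair hbc]
  have heq := Set.eq_of_subset_of_ncard_le hsub (by rw [hcard]; exact hd.le)
    (G.neighborSet_finite v)
  intro u hu
  have : u ∈ ({a, b, c} : Set ℕ) := heq ▸ hu
  simpa using this

lemma exists_adj_eq_or_eq_or_eq {v a b : ℕ} (hd : G.degree v = 3) (hab : a ≠ b)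
    (ha : G.Adj v a) (hb : G.Adj v b) : ∃ c, ∀ u, G.Adj v u → u = a ∨ u = b ∨ u = c := by
  have hnsub : ¬ G.neighborSet v ⊆ {a, b} := fun hsub => by
    have := Set.ncard_le_ncard hsub (Set.toFinite _)
    rw [Set.ncard_pair hab] at this
    exact absurd (hd ▸ this : 3 ≤ 2) (by norm_num)
  obtain ⟨c, hc, hcab⟩ := Set.not_subset.mp hnsub
  simp only [Set.mem_insert_iff, Set.mem_singleton_iff, not_or] at hcab
  exact ⟨c, eq_or_eq_or_eq_of_degree_eq_three hd hab (Ne.symm hcab.1) (Ne.symm hcab.2) ha hb hc⟩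

end Degree

section Model

structure IsMinorModel (G K : FinGraph) (B : ℕ → Finset ℕ) : Prop where
  nonempty : ∀ i ∈ K.verts, (B i).Nonempty
  subset : ∀ i ∈ K.verts, ↑(B i) ⊆ (↑G.verts : Set ℕ)
  connectedOn : ∀ i ∈ K.verts, G.ConnectedOn ↑(B i)
  disjoint : ∀ i ∈ K.verts, ∀ j ∈ K.verts, i ≠ j → Disjoint (B i) (B j)
  exists_adj : ∀ i j, K.Adj i j → ∃ a ∈ B i, ∃ b ∈ B j, G.Adj a b

lemma hasMinor_iff : G.HasMinor K ↔ ∃ B, G.IsMinorModel K B :=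
  ⟨fun ⟨B, h1, h2, h3⟩ => ⟨B, fun i hi => (h1 i hi).1, fun i hi => (h1 i hi).2.1,
      fun i hi => (h1 i hi).2.2, h2, h3⟩,
    fun ⟨B, h⟩ => ⟨B, fun i hi => ⟨h.nonempty i hi, h.subset i hi, h.connectedOn i hi⟩,
      h.disjoint, h.exists_adj⟩⟩

variable {B : ℕ → Finset ℕ}

lemma IsMinorModel.eq_of_mem (hB : G.IsMinorModel K B) {i j x : ℕ} (hi : i ∈ K.verts)
    (hj : j ∈ K.verts) (hxi : x ∈ B i) (hxj : x ∈ B j) : i = j := by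
  by_contra hij
  exact Finset.disjoint_left.mp (hB.disjoint i hi j hj hij) hxi hxj

lemma IsMinorModel.mem_verts (hB : G.IsMinorModel K B) {i x : ℕ} (hi : i ∈ K.verts)
    (hx : x ∈ B i) : x ∈ G.verts :=
  Finset.mem_coe.mp (hB.subset i hi (Finset.mem_coe.mpr hx))

lemma HasMinor.card_le (h : G.HasMinor K) : K.verts.card ≤ G.verts.card := by
  obtain ⟨B, hB⟩ := hasMinor_iff.mp h
  choose! f hf using hB.nonempty
  exact Finset.card_le_card_of_injOn f (fun i hi => hB.mem_verts hi (hf i hi))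
    fun i hi j hj hij => hB.eq_of_mem hi hj (hf i hi) (hij ▸ hf j hj)

lemma IsMinorModel.image (hB : G.IsMinorModel K B) (f : ℕ → ℕ)
    (hverts : ∀ a ∈ G.verts, f a ∈ H.verts)
    (hadj : ∀ a b, G.Adj a b → f a = f b ∨ H.Adj (f a) (f b))
    (hsep : ∀ i ∈ K.verts, ∀ j ∈ K.verts, i ≠ j → ∀ a ∈ B i, ∀ b ∈ B j, f a ≠ f b) :
    H.IsMinorModel K fun i => (B i).image f where
  nonempty i hi := (hB.nonempty i hi).image f
  subset i hi := by
    intro x hx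
    obtain ⟨a, ha, rfl⟩ := Finset.mem_image.mp hx
    exact hverts a (hB.mem_verts hi ha)
  connectedOn i hi := by
    rw [Finset.coe_image]
    exact (hB.connectedOn i hi).image f fun a _ b _ hab => hadj a b hab
  disjoint i hi j hj hij := by
    rw [Finset.disjoint_left]
    intro x hxi hxj
    obtain ⟨a, ha, rfl⟩ := Finset.mem_image.mp hxi
    obtain ⟨b, hb, hab⟩ := Finset.mem_image.mp hxj
    exact hsep i hi j hj hij a ha b hb hab.symm
  exists_adj i j hij := by
    obtain ⟨a, ha, b, hb, hab⟩ := hB.exists_adj i j hij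
    have hi := (K.support i j hij).1
    have hj := (K.support i j hij).2
    have hne : i ≠ j := fun h => K.loopless i (h ▸ hij)
    refine ⟨f a, Finset.mem_image_of_mem f ha, f b, Finset.mem_image_of_mem f hb, ?_⟩
    exact (hadj a b hab).resolve_left (hsep i hi j hj hne a ha b hb)

def moveTo (B : ℕ → Finset ℕ) (v y : ℕ) : ℕ → Finset ℕ :=
  fun i => if i = y then insert v (B i) else (B i).erase v

@[simp] lemma moveTo_self (v y : ℕ) : moveTo B v y y = insert v (B y) := if_pos rfl

@[simp] lemma moveTo_of_ne {v y i : ℕ} (h : i ≠ y) : moveTo B v y i = (B i).erase v := if_neg h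

lemma moveTo_of_notMem {v y i : ℕ} (h : i ≠ y) (hv : v ∉ B i) : moveTo B v y i = B i := by
  rw [moveTo_of_ne h, Finset.erase_eq_of_notMem hv]

lemma mem_moveTo_of_ne {v y i x : ℕ} (hx : x ∈ B i) (hxv : x ≠ v) : x ∈ moveTo B v y i := by
  unfold moveTo
  split_ifs
  · exact Finset.mem_insert_of_mem hx
  · exact Finset.mem_erase.mpr ⟨hxv, hx⟩

lemma IsMinorModel.disjoint_moveTo (hB : G.IsMinorModel K B) (v y : ℕ) {i j : ℕ}
    (hi : i ∈ K.verts) (hj : j ∈ K.verts) (hij : i ≠ j) :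
    Disjoint (moveTo B v y i) (moveTo B v y j) := by
  have hBij := hB.disjoint i hi j hj hij
  by_cases hiy : i = y
  · subst hiy
    rw [moveTo_self, moveTo_of_ne (Ne.symm hij), Finset.disjoint_insert_left]
    exact ⟨Finset.notMem_erase v _, hBij.mono_right (Finset.erase_subset v _)⟩
  by_cases hjy : j = y
  · subst hjy
    rw [moveTo_self, moveTo_of_ne hij, Finset.disjoint_insert_right]
    exact ⟨Finset.notMem_erase v _, hBij.mono_left (Finset.erase_subset v _)⟩
  rw [moveTo_of_ne hiy, moveTo_of_ne hjy]
  exact hBij.mono (Finset.erase_subset v _) (Finset.erase_subset v _)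

lemma IsMinorModel.exists_adj_moveTo (hB : G.IsMinorModel K B) {v y : ℕ}
    (hne : ∀ x ∈ K.verts, x ≠ y → v ∈ B x → ((B x).erase v).Nonempty)
    (hedge : ∀ x ∈ K.verts, x ≠ y → v ∈ B x →
      ∀ z, K.Adj x z → z ≠ y → ∃ a ∈ (B x).erase v, ∃ b ∈ B z, G.Adj a b)
    {i j : ℕ} (hij : K.Adj i j) : ∃ a ∈ moveTo B v y i, ∃ b ∈ moveTo B v y j, G.Adj a b := by
  -- an edge of `G` between `B i` and `B j` has at most one end `v`; by symmetry it is `a`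
  suffices key : ∀ i j, K.Adj i j → ∀ a ∈ B i, ∀ b ∈ B j, G.Adj a b → b ≠ v →
      ∃ a' ∈ moveTo B v y i, ∃ b' ∈ moveTo B v y j, G.Adj a' b' by
    obtain ⟨a, ha, b, hb, hab⟩ := hB.exists_adj i j hij
    by_cases hbv : b = v
    · have hav : a ≠ v := by
        rintro rfl
        exact G.loopless a (hbv ▸ hab)
      obtain ⟨b', hb', a', ha', hba⟩ := key j i (K.symm i j hij) b hb a ha (G.symm a b hab) hav
      exact ⟨a', ha', b', hb', G.symm _ _ hba⟩
    · exact key i j hij a ha b hb hab hbv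
  intro i j hij a ha b hb hab hbv
  have hi := (K.support i j hij).1
  have hb' := mem_moveTo_of_ne (y := y) hb hbv
  by_cases hav : a = v
  swap
  · exact ⟨a, mem_moveTo_of_ne ha hav, b, hb', hab⟩
  subst hav
  by_cases hiy : i = y
  · subst hiy
    exact ⟨a, by simp, b, hb', hab⟩
  by_cases hjy : j = y
  · subst hjy
    obtain ⟨w, hw⟩ := hne i hi hiy ha
    obtain ⟨u, hu, hau⟩ := (hB.connectedOn i hi).exists_adj ha (Finset.mem_of_mem_erase hw)
      (Finset.ne_of_mem_erase hw).symm
    have hua : u ≠ a := fun h => G.loopless a (h ▸ hau)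
    exact ⟨u, mem_moveTo_of_ne hu hua, a, by simp, G.symm _ _ hau⟩
  obtain ⟨a', ha', b', hb'', hab'⟩ := hedge i hi hiy ha j hij hjy
  have hb'a : b' ≠ a := by
    rintro rfl
    exact K.loopless i (hB.eq_of_mem hi (K.support i j hij).2 ha hb'' ▸ hij)
  exact ⟨a', mem_moveTo_of_ne (Finset.mem_of_mem_erase ha') (Finset.ne_of_mem_erase ha'),
    b', mem_moveTo_of_ne hb'' hb'a, hab'⟩

lemma IsMinorModel.move (hB : G.IsMinorModel K B) {v y : ℕ} (hy : y ∈ K.verts)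
    (hv : v ∈ G.verts) (hvy : ∃ u ∈ B y, G.Adj v u)
    (hne : ∀ x ∈ K.verts, x ≠ y → v ∈ B x → ((B x).erase v).Nonempty)
    (hconn : ∀ x ∈ K.verts, x ≠ y → v ∈ B x → G.ConnectedOn ↑((B x).erase v))
    (hedge : ∀ x ∈ K.verts, x ≠ y → v ∈ B x →
      ∀ z, K.Adj x z → z ≠ y → ∃ a ∈ (B x).erase v, ∃ b ∈ B z, G.Adj a b) :
    G.IsMinorModel K (moveTo B v y) where
  nonempty i hi := by
    by_cases hiy : i = y
    · simp [hiy]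
    by_cases hvi : v ∈ B i
    · exact moveTo_of_ne hiy ▸ hne i hi hiy hvi
    · exact moveTo_of_notMem hiy hvi ▸ hB.nonempty i hi
  subset i hi := by
    by_cases hiy : i = y
    · subst hiy
      rw [moveTo_self, Finset.coe_insert]
      exact Set.insert_subset hv (hB.subset i hi)
    · rw [moveTo_of_ne hiy, Finset.coe_erase]
      exact Set.sdiff_subset.trans (hB.subset i hi)
  connectedOn i hi := by
    by_cases hiy : i = y
    · subst hiy
      obtain ⟨u, hu, hvu⟩ := hvy
      rw [moveTo_self, Finset.coe_insert]
      exact (hB.connectedOn i hi).insert_of_adj hu hvu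
    by_cases hvi : v ∈ B i
    · exact moveTo_of_ne hiy ▸ hconn i hi hiy hvi
    · exact moveTo_of_notMem hiy hvi ▸ hB.connectedOn i hi
  disjoint i hi j hj hij := hB.disjoint_moveTo v y hi hj hij
  exists_adj i j hij := hB.exists_adj_moveTo hne hedge hij

lemma IsMinorModel.ncard_le (hB : G.IsMinorModel K B) {T N : Set ℕ} (hT : T ⊆ K.verts)
    (hN : N.Finite) (hw : ∀ j ∈ T, ∃ b ∈ B j, b ∈ N) : T.ncard ≤ N.ncard := by
  choose! f hf using hw
  exact Set.ncard_le_ncard_of_injOn f (fun j hj => (hf j hj).2)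
    (fun i hi j hj hij => hB.eq_of_mem (hT hi) (hT hj) (hf i hi).1 (hij ▸ (hf j hj).1)) hN

lemma IsMinorModel.degree_le_of_eq_singleton (hB : G.IsMinorModel K B) {x v : ℕ} {N : Set ℕ}
    (hxv : B x = {v}) (hN : N.Finite)
    (hw : ∀ j, K.Adj x j → ∀ u ∈ B j, G.Adj v u → ∃ b ∈ B j, b ∈ N) :
    K.degree x ≤ N.ncard :=
  hB.ncard_le (fun j hj => (K.support x j hj).2) hN fun j hj => by
    obtain ⟨a, ha, b, hb, hab⟩ := hB.exists_adj x j hj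
    rw [hxv, Finset.mem_singleton] at ha
    exact hw j hj b hb (ha ▸ hab)

lemma IsMinorModel.ne_singleton_of_degree_lt (hB : G.IsMinorModel K B) {x v : ℕ}
    (h : G.degree v < K.degree x) : B x ≠ {v} := fun hxv =>
  (hB.degree_le_of_eq_singleton hxv (G.neighborSet_finite v)
    fun _ _ u hu hvu => ⟨u, hu, hvu⟩).not_gt h

lemma IsMinorModel.connectedOn_erase (hB : G.IsMinorModel K B) {x v c : ℕ} (hx : x ∈ K.verts)
    (hvx : v ∈ B x) (hsing : B x ≠ {v}) (hleaf : ∀ u ∈ B x, G.Adj v u → u = c) :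
    c ∈ B x ∧ c ≠ v ∧ G.ConnectedOn ↑((B x).erase v) := by
  obtain ⟨w, hw, hwv⟩ : ∃ w ∈ B x, w ≠ v := by
    by_contra! h
    exact hsing (Finset.eq_singleton_iff_unique_mem.mpr ⟨hvx, h⟩)
  obtain ⟨c', hc', hvc'⟩ := (hB.connectedOn x hx).exists_adj hvx hw hwv.symm
  obtain rfl := hleaf c' hc' hvc'
  have hcv : c' ≠ v := by rintro rfl; exact G.loopless _ hvc'
  refine ⟨hc', hcv, ?_⟩
  rw [Finset.coe_erase]
  exact (hB.connectedOn x hx).diff_singleton hc' hcv hleaf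

/-- The degree bound on `x` rules out `B x = {v}`, so `c ∈ B x` and `v` is a leaf of `B x`. -/
lemma IsMinorModel.move_of_adj_eq_or (hB : G.IsMinorModel K B) {v x y a b c : ℕ}
    (hK : 3 ≤ K.degree x) (hx : x ∈ K.verts) (hy : y ∈ K.verts) (hxy : x ≠ y) (hvx : v ∈ B x)
    (hnbr : ∀ u, G.Adj v u → u = a ∨ u = b ∨ u = c) (hva : G.Adj v a) (ha : a ∈ B y)
    (hbx : b ∉ B x) (hb : ∀ j, K.Adj x j → b ∈ B j → j = y) :
    G.IsMinorModel K (moveTo B v y) := by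
  have hsing : B x ≠ {v} := fun hxv => by
    have hle := hB.degree_le_of_eq_singleton (N := {a, c}) hxv (Set.toFinite _)
      fun j hj u hu hvu => by
        rcases hnbr u hvu with rfl | rfl | rfl
        · exact ⟨u, hu, by simp⟩
        · exact ⟨a, hb j hj hu ▸ ha, by simp⟩
        · exact ⟨u, hu, by simp⟩
    have := hle.trans (Set.ncard_insert_le a {c})
    rw [Set.ncard_singleton] at this
    omega
  have hleaf : ∀ u ∈ B x, G.Adj v u → u = c := fun u hu hvu => by
    rcases hnbr u hvu with rfl | rfl | rfl
    · exact absurd (hB.eq_of_mem hx hy hu ha) hxy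
    · exact absurd hu hbx
    · rfl
  obtain ⟨hc, hcv, hconn⟩ := hB.connectedOn_erase hx hvx hsing hleaf
  have hsrc : ∀ x' ∈ K.verts, v ∈ B x' → x' = x := fun x' hx' hvx' =>
    hB.eq_of_mem hx' hx hvx' hvx
  refine hB.move hy (hB.mem_verts hx hvx) ⟨a, ha, hva⟩
    (fun x' hx' _ hvx' => hsrc x' hx' hvx' ▸ ⟨c, Finset.mem_erase.mpr ⟨hcv, hc⟩⟩)
    (fun x' hx' _ hvx' => hsrc x' hx' hvx' ▸ hconn) fun x' hx' _ hvx' z hxz hzy => ?_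
  obtain rfl := hsrc x' hx' hvx'
  obtain ⟨a', ha', b', hb', hab'⟩ := hB.exists_adj x' z hxz
  have hz := (K.support x' z hxz).2
  by_cases ha'v : a' = v
  · subst ha'v
    rcases hnbr b' hab' with rfl | rfl | rfl
    · exact absurd (hB.eq_of_mem hz hy hb' ha) hzy
    · exact absurd (hb z hxz hb') hzy
    · exact absurd (hB.eq_of_mem hx hz hc hb' ▸ hxz) (K.loopless x')
  · exact ⟨a', Finset.mem_erase.mpr ⟨ha'v, ha'⟩, b', hb', hab'⟩

end Model

section Kuratowski

lemma K5Graph.degree_eq {x : ℕ} (hx : x ∈ K5Graph.verts) : K5Graph.degree x = 4 := by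
  have hx5 : x < 5 := Finset.mem_range.mp hx
  have : K5Graph.neighborSet x = ↑((Finset.range 5).erase x) := by
    ext u
    simp [neighborSet, K5Graph]
    omega
  rw [degree, this, Set.ncard_coe_finset, Finset.card_erase_of_mem (Finset.mem_range.mpr hx5),
    Finset.card_range]

lemma K33Graph.degree_eq {x : ℕ} (hx : x ∈ K33Graph.verts) : K33Graph.degree x = 3 := by
  have hx6 : x < 6 := Finset.mem_range.mp hx
  have : K33Graph.neighborSet x = ↑(if x < 3 then Finset.Ico 3 6 else Finset.range 3) := by
    ext u
    split_ifs <;> simp [neighborSet, K33Graph] <;> omega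
  rw [degree, this, Set.ncard_coe_finset]
  split_ifs <;> rfl

lemma K33Graph.not_adj_of_adj_of_adj {i a b : ℕ} (ha : K33Graph.Adj i a)
    (hb : K33Graph.Adj i b) : ¬ K33Graph.Adj a b := by
  simp only [K33Graph] at *
  omega

def HasKuratowskiMinor (G : FinGraph) : Prop := G.HasMinor K5Graph ∨ G.HasMinor K33Graph

lemma planar_iff_not_hasKuratowskiMinor : G.Planar ↔ ¬ G.HasKuratowskiMinor :=
  not_or.symm

lemma IsK4.not_hasKuratowskiMinor (h : G.IsK4) : ¬ G.HasKuratowskiMinor := by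
  rintro (h5 | h33) <;> have := HasMinor.card_le ‹_› <;> simp [h.1, K5Graph, K33Graph] at this

end Kuratowski

section D3b

variable {B : ℕ → Finset ℕ} {p q r s : ℕ}

lemma D3bConfig.adj_q (h : G.D3bConfig p q r s) : ∀ u, G.Adj q u → u = p ∨ u = r ∨ u = s := by
  obtain ⟨-, hq, -, hpq, hqr, -, hpr, hsp, hsq, hsr⟩ := h
  exact eq_or_eq_or_eq_of_degree_eq_three hq hpr (fun h => G.loopless s (h ▸ hsp))
    (fun h => G.loopless s (h ▸ hsr)) (G.symm _ _ hpq) hqr (G.symm _ _ hsq)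

/-- The neighbourhood `{p, r, s}` of `q` becomes a clique once `pr` is added, so `q` may be
contracted into any of its neighbours. -/
lemma D3bConfig.eq_or_adj (h : G.D3bConfig p q r s)
    (hadj : ∀ a b, H.Adj a b ↔ (G.Adj a b ∧ a ≠ q ∧ b ≠ q) ∨ (a = p ∧ b = r) ∨ (a = r ∧ b = p))
    {a b : ℕ} (ha : G.Adj q a) (hb : G.Adj q b) : a = b ∨ H.Adj a b := by
  have hG : ∀ {a b}, G.Adj q a → G.Adj q b → G.Adj a b → a = b ∨ H.Adj a b :=
    fun ha hb hab => Or.inr ((hadj _ _).mpr (Or.inl ⟨hab, fun h => G.loopless q (h ▸ ha),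
      fun h => G.loopless q (h ▸ hb)⟩))
  have hq := h.adj_q
  obtain ⟨-, -, -, -, -, -, -, hsp, -, hsr⟩ := h
  rcases hq a ha with rfl | rfl | rfl <;> rcases hq b hb with rfl | rfl | rfl <;>
    first
    | exact Or.inl rfl
    | exact Or.inr ((hadj _ _).mpr (by tauto))
    | exact hG ha hb hsp
    | exact hG ha hb hsr
    | exact hG ha hb (G.symm _ _ hsp)
    | exact hG ha hb (G.symm _ _ hsr)

lemma IsMinorModel.exists_adj_forall_mem (hB : G.IsMinorModel K B) {v u : ℕ} (hvu : G.Adj v u)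
    (hv : ∀ i ∈ K.verts, B i ≠ {v}) : ∃ y, G.Adj v y ∧ ∀ i ∈ K.verts, v ∈ B i → y ∈ B i := by
  by_cases hex : ∃ i ∈ K.verts, v ∈ B i
  · obtain ⟨i, hi, hvi⟩ := hex
    obtain ⟨w, hw, hwv⟩ : ∃ w ∈ B i, w ≠ v := by
      by_contra! hall
      exact hv i hi (Finset.eq_singleton_iff_unique_mem.mpr ⟨hvi, hall⟩)
    obtain ⟨y, hyi, hvy⟩ := (hB.connectedOn i hi).exists_adj hvi hw hwv.symm
    exact ⟨y, hvy, fun j hj hvj => hB.eq_of_mem hi hj hvi hvj ▸ hyi⟩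
  · push Not at hex
    exact ⟨u, hvu, fun i hi hvi => absurd hvi (hex i hi)⟩

/-- Contract `q` into a neighbour inside its own branch set. -/
lemma D3bConfig.hasMinor_of_ne_singleton (h : G.D3bConfig p q r s)
    (hverts : H.verts = G.verts \ {q})
    (hadj : ∀ a b, H.Adj a b ↔ (G.Adj a b ∧ a ≠ q ∧ b ≠ q) ∨ (a = p ∧ b = r) ∨ (a = r ∧ b = p))
    (hB : G.IsMinorModel K B) (hq : ∀ i ∈ K.verts, B i ≠ {q}) : H.HasMinor K := by
  obtain ⟨y, hqy, hy⟩ := hB.exists_adj_forall_mem (G.symm _ _ h.2.2.2.1) hq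
  have hyq : y ≠ q := fun e => G.loopless q (e ▸ hqy)
  refine hasMinor_iff.mpr ⟨_, hB.image (fun a => if a = q then y else a) ?_ ?_ ?_⟩
  · intro a ha
    rw [hverts]
    split_ifs with haq
    · exact Finset.mem_sdiff.mpr ⟨(G.support q y hqy).2, by simpa using hyq⟩
    · exact Finset.mem_sdiff.mpr ⟨ha, by simpa using haq⟩
  · intro a b hab
    by_cases haq : a = q
    · subst haq
      have hba : b ≠ a := fun e => G.loopless a (e ▸ hab)
      simpa [hba] using h.eq_or_adj hadj hqy hab
    by_cases hbq : b = q
    · subst hbq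
      simpa [haq, eq_comm] using h.eq_or_adj hadj (G.symm _ _ hab) hqy
    · simp only [haq, hbq, if_false]
      exact Or.inr ((hadj a b).mpr (Or.inl ⟨hab, haq, hbq⟩))
  · intro i hi j hj hij a ha b hb hfab
    have himage : ∀ k ∈ K.verts, ∀ c ∈ B k, (if c = q then y else c) ∈ B k := by
      intro k hk c hc
      split_ifs with hcq
      · exact hy k hk (hcq ▸ hc)
      · exact hc
    exact hij (hB.eq_of_mem hi hj (himage i hi a ha) (hfab ▸ himage j hj b hb))

lemma D3bConfig.exists_branches_of_eq_singleton (h : G.D3bConfig p q r s)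
    (hB : G.IsMinorModel K33Graph B) {i₀ : ℕ} (hi₀ : i₀ ∈ K33Graph.verts) (hBi₀ : B i₀ = {q}) :
    ∃ jp js, K33Graph.Adj i₀ jp ∧ K33Graph.Adj i₀ js ∧ p ∈ B jp ∧ s ∈ B js ∧ s ∉ B jp := by
  have hq := h.adj_q
  -- the three branch sets adjacent to `{q}` must be met by the three neighbours `p, r, s`
  have hcount : ∀ {a b : ℕ}, (∀ j, K33Graph.Adj i₀ j → ∀ u ∈ B j, G.Adj q u →
      ∃ c ∈ B j, c = a ∨ c = b) → False := fun {a b} hw => by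
    have hle := hB.degree_le_of_eq_singleton (N := {a, b}) hBi₀ (Set.toFinite _)
      fun j hj u hu hqu => by simpa using hw j hj u hu hqu
    have := hle.trans (Set.ncard_insert_le a {b})
    rw [K33Graph.degree_eq hi₀, Set.ncard_singleton] at this
    omega
  obtain ⟨jp, hjp, hpjp⟩ : ∃ j, K33Graph.Adj i₀ j ∧ p ∈ B j := by
    by_contra! hp
    refine hcount (a := r) (b := s) fun j hj u hu hqu => ?_
    rcases hq u hqu with rfl | rfl | rfl
    · exact absurd hu (hp j hj)
    all_goals exact ⟨u, hu, by simp⟩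
  obtain ⟨js, hjs, hsjs⟩ : ∃ j, K33Graph.Adj i₀ j ∧ s ∈ B j := by
    by_contra! hs
    refine hcount (a := p) (b := r) fun j hj u hu hqu => ?_
    rcases hq u hqu with rfl | rfl | rfl
    · exact ⟨u, hu, by simp⟩
    · exact ⟨u, hu, by simp⟩
    · exact absurd hu (hs j hj)
  refine ⟨jp, js, hjp, hjs, hpjp, hsjs, fun hs => ?_⟩
  refine hcount (a := p) (b := r) fun j hj u hu hqu => ?_
  rcases hq u hqu with rfl | rfl | rfl
  · exact ⟨u, hu, by simp⟩
  · exact ⟨u, hu, by simp⟩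
  · have := hB.eq_of_mem (K33Graph.support _ _ hjp).2 (K33Graph.support _ _ hj).2 hs hu
    exact ⟨p, this ▸ hpjp, by simp⟩

/-- A branch set `{q}` of a `K₃,₃` model can be enlarged by moving `p` into it. -/
lemma D3bConfig.exists_isMinorModel_K33 (h : G.D3bConfig p q r s)
    (hB : G.IsMinorModel K33Graph B) :
    ∃ B', G.IsMinorModel K33Graph B' ∧ ∀ i ∈ K33Graph.verts, B' i ≠ {q} := by
  by_cases hsing : ∀ i ∈ K33Graph.verts, B i ≠ {q}
  · exact ⟨B, hB, hsing⟩
  push Not at hsing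
  obtain ⟨i₀, hi₀, hBi₀⟩ := hsing
  obtain ⟨jp, js, hjp, hjs, hpjp, hsjs, hsjp⟩ := h.exists_branches_of_eq_singleton hB hi₀ hBi₀
  obtain ⟨hp3, -, -, hpq, -, -, -, hsp, hsq, -⟩ := h
  have hqi₀ : q ∈ B i₀ := hBi₀ ▸ Finset.mem_singleton_self q
  have hjpv := (K33Graph.support _ _ hjp).2
  have hnadj : ∀ j, K33Graph.Adj jp j → s ∈ B j → j = i₀ := fun j hj hsj =>
    absurd (hB.eq_of_mem (K33Graph.support _ _ hj).2 (K33Graph.support _ _ hjs).2 hsj hsjs ▸ hj)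
      (K33Graph.not_adj_of_adj_of_adj hjp hjs)
  have hqs : q ≠ s := fun e => G.loopless s (e ▸ hsq)
  obtain ⟨w, hw⟩ := exists_adj_eq_or_eq_or_eq hp3 hqs hpq (G.symm _ _ hsp)
  have hjpi₀ : jp ≠ i₀ := fun e => K33Graph.loopless _ (e ▸ hjp)
  refine ⟨_, hB.move_of_adj_eq_or (K33Graph.degree_eq hjpv).ge hjpv hi₀ hjpi₀ hpjp hw hpq hqi₀
    hsjp hnadj, fun i hi hBi => ?_⟩
  by_cases hii₀ : i = i₀
  · subst hii₀
    rw [moveTo_self, hBi₀] at hBi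
    exact G.loopless q (Finset.mem_singleton.mp (Finset.insert_eq_self.mp hBi) ▸ hpq)
  · rw [moveTo_of_ne hii₀] at hBi
    have hqi : q ∈ B i := Finset.mem_of_mem_erase (hBi ▸ Finset.mem_singleton_self q)
    exact hii₀ (hB.eq_of_mem hi hi₀ hqi hqi₀)

lemma D3b.hasKuratowskiMinor (h : G.D3b H) (hG : G.HasKuratowskiMinor) :
    H.HasKuratowskiMinor := by
  obtain ⟨p, q, r, s, hcfg, hverts, hadj⟩ := h
  rcases hG with h5 | h33
  · obtain ⟨B, hB⟩ := hasMinor_iff.mp h5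
    refine Or.inl (hcfg.hasMinor_of_ne_singleton hverts hadj hB fun i hi => ?_)
    exact hB.ne_singleton_of_degree_lt (by rw [hcfg.2.1, K5Graph.degree_eq hi]; norm_num)
  · obtain ⟨B, hB⟩ := hasMinor_iff.mp h33
    obtain ⟨B', hB', hq⟩ := hcfg.exists_isMinorModel_K33 hB
    exact Or.inr (hcfg.hasMinor_of_ne_singleton hverts hadj hB' hq)

end D3b

section D3a

variable {B : ℕ → Finset ℕ} {p q r p' q' r' : ℕ}

lemma D3aConfig.swap12 (h : G.D3aConfig p q r p' q' r') : G.D3aConfig q p r q' p' r' := by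
  obtain ⟨dp, dq, dr, hpq, hqr, hpr, hpp, hqq, hrr, hp', hq', hr', h12, h13, h23⟩ := h
  refine ⟨dq, dp, dr, G.symm _ _ hpq, hpr, hqr, hqq, hpp, hrr, ?_, ?_, ?_, h12.symm, h23, h13⟩ <;>
    simp only [Set.mem_insert_iff, Set.mem_singleton_iff] at * <;> tauto

lemma D3aConfig.rot (h : G.D3aConfig p q r p' q' r') : G.D3aConfig q r p q' r' p' := by
  obtain ⟨dp, dq, dr, hpq, hqr, hpr, hpp, hqq, hrr, hp', hq', hr', h12, h13, h23⟩ := h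
  refine ⟨dq, dr, dp, hqr, G.symm _ _ hpr, G.symm _ _ hpq, hqq, hrr, hpp, ?_, ?_, ?_,
    h23, h12.symm, h13.symm⟩ <;>
    simp only [Set.mem_insert_iff, Set.mem_singleton_iff] at * <;> tauto

lemma D3aConfig.adj_p (h : G.D3aConfig p q r p' q' r') :
    ∀ u, G.Adj p u → u = q ∨ u = r ∨ u = p' := by
  obtain ⟨dp, -, -, hpq, hqr, hpr, hpp, -, -, hp', -⟩ := h
  simp only [Set.mem_insert_iff, Set.mem_singleton_iff, not_or] at hp'
  exact eq_or_eq_or_eq_of_degree_eq_three dp (fun e => G.loopless r (e ▸ hqr))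
    (fun e => hp'.2.1 e.symm) (fun e => hp'.2.2 e.symm) hpq hpr hpp

lemma D3aConfig.eq_of_adj_of_notMem (h : G.D3aConfig p q r p' q' r') {x u u' : ℕ}
    (hx : x ∈ ({p, q, r} : Finset ℕ)) (hu : G.Adj x u) (hu' : G.Adj x u')
    (huT : u ∉ ({p, q, r} : Finset ℕ)) (hu'T : u' ∉ ({p, q, r} : Finset ℕ)) : u = u' := by
  have h1 := h.adj_p
  have h2 := h.rot.adj_p
  have h3 := h.rot.rot.adj_p
  simp only [Finset.mem_insert, Finset.mem_singleton] at hx huT hu'T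
  rcases hx with rfl | rfl | rfl
  · rcases h1 u hu with rfl | rfl | rfl <;> rcases h1 u' hu' with rfl | rfl | rfl <;> tauto
  · rcases h2 u hu with rfl | rfl | rfl <;> rcases h2 u' hu' with rfl | rfl | rfl <;> tauto
  · rcases h3 u hu with rfl | rfl | rfl <;> rcases h3 u' hu' with rfl | rfl | rfl <;> tauto

lemma D3aConfig.mem_of_adj_of_notMem (h : G.D3aConfig p q r p' q' r') {x u : ℕ}
    (hx : x ∈ ({p, q, r} : Finset ℕ)) (hu : G.Adj x u) (huT : u ∉ ({p, q, r} : Finset ℕ)) :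
    u ∈ ({p', q', r'} : Set ℕ) := by
  have h1 := h.adj_p
  have h2 := h.rot.adj_p
  have h3 := h.rot.rot.adj_p
  simp only [Finset.mem_insert, Finset.mem_singleton] at hx huT
  simp only [Set.mem_insert_iff, Set.mem_singleton_iff]
  rcases hx with rfl | rfl | rfl
  · rcases h1 u hu with rfl | rfl | rfl <;> tauto
  · rcases h2 u hu with rfl | rfl | rfl <;> tauto
  · rcases h3 u hu with rfl | rfl | rfl <;> tauto

def HasConcentratedMinor (G K : FinGraph) (T : Finset ℕ) : Prop :=
  ∃ B, G.IsMinorModel K B ∧ ∃ j, ∀ i ∈ K.verts, i ≠ j → Disjoint (B i) T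

lemma D3aConfig.hasMinor_of_hasConcentratedMinor {t : ℕ} (h : G.D3aConfig p q r p' q' r')
    (ht : t ∉ G.verts) (hverts : H.verts = (G.verts \ {p, q, r}) ∪ {t})
    (hadj : ∀ a b, H.Adj a b ↔
      (G.Adj a b ∧ a ∉ ({p, q, r} : Set ℕ) ∧ b ∉ ({p, q, r} : Set ℕ)) ∨
      (a = t ∧ b ∈ ({p', q', r'} : Set ℕ)) ∨ (b = t ∧ a ∈ ({p', q', r'} : Set ℕ)))
    (hK : G.HasConcentratedMinor K {p, q, r}) : H.HasMinor K := by
  obtain ⟨B, hB, j, hj⟩ := hK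
  have hT : ∀ x, x ∈ ({p, q, r} : Set ℕ) ↔ x ∈ ({p, q, r} : Finset ℕ) := by simp
  refine hasMinor_iff.mpr ⟨_, hB.image (fun a => if a ∈ ({p, q, r} : Finset ℕ) then t else a)
    ?_ ?_ ?_⟩
  · intro a ha
    rw [hverts]
    split_ifs with haT
    · exact Finset.mem_union_right _ (Finset.mem_singleton_self t)
    · exact Finset.mem_union_left _ (Finset.mem_sdiff.mpr ⟨ha, haT⟩)
  · intro a b hab
    by_cases haT : a ∈ ({p, q, r} : Finset ℕ) <;> by_cases hbT : b ∈ ({p, q, r} : Finset ℕ) <;>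
      simp only [haT, hbT, if_true, if_false]
    · simp
    · exact Or.inr ((hadj _ _).mpr (Or.inr (Or.inl ⟨rfl, h.mem_of_adj_of_notMem haT hab hbT⟩)))
    · exact Or.inr ((hadj _ _).mpr
        (Or.inr (Or.inr ⟨rfl, h.mem_of_adj_of_notMem hbT (G.symm _ _ hab) haT⟩)))
    · exact Or.inr ((hadj _ _).mpr (Or.inl ⟨hab, by rwa [hT], by rwa [hT]⟩))
  · intro i hi k hk hik a ha b hb hab
    have hmeet : ∀ l ∈ K.verts, ∀ x ∈ B l, x ∈ ({p, q, r} : Finset ℕ) → l = j :=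
      fun l hl x hx hxT => by_contra fun hlj => Finset.disjoint_left.mp (hj l hl hlj) hx hxT
    by_cases haT : a ∈ ({p, q, r} : Finset ℕ) <;> by_cases hbT : b ∈ ({p, q, r} : Finset ℕ) <;>
      simp only [haT, hbT, if_true, if_false] at hab
    · exact hik ((hmeet i hi a ha haT).trans (hmeet k hk b hb hbT).symm)
    · exact ht (hab ▸ hB.mem_verts hk hb)
    · exact ht (hab ▸ hB.mem_verts hi ha)
    · exact hik (hB.eq_of_mem hi hk ha (hab ▸ hb))

variable (B) in
def TriangleSpread (K : FinGraph) (p q r : ℕ) : Prop :=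
  ∃ a ∈ K.verts, ∃ b ∈ K.verts, ∃ c ∈ K.verts, a ≠ b ∧ a ≠ c ∧ b ≠ c ∧
    p ∈ B a ∧ q ∈ B b ∧ r ∈ B c

lemma exists_ne_of_not_concentrated {T : Finset ℕ}
    (h : ¬ ∃ j, ∀ i ∈ K.verts, i ≠ j → Disjoint (B i) T) :
    ∃ i₁ ∈ K.verts, ∃ i₂ ∈ K.verts, i₂ ≠ i₁ ∧ ∃ x ∈ B i₁, x ∈ T ∧ ∃ y ∈ B i₂, y ∈ T := by
  push Not at h
  obtain ⟨i₁, hi₁, -, h₁⟩ := h 0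
  obtain ⟨i₂, hi₂, hi₂₁, h₂⟩ := h i₁
  obtain ⟨x, hx, hxT⟩ := Finset.not_disjoint_iff.mp h₁
  obtain ⟨y, hy, hyT⟩ := Finset.not_disjoint_iff.mp h₂
  exact ⟨i₁, hi₁, i₂, hi₂, hi₂₁, x, hx, hxT, y, hy, hyT⟩

lemma D3aConfig.hasConcentratedMinor_of_mem_of_mem (h : G.D3aConfig p q r p' q' r')
    (hB : G.IsMinorModel K B) {a b : ℕ} (hK : 3 ≤ K.degree b) (ha : a ∈ K.verts)
    (hb : b ∈ K.verts) (hab : a ≠ b) (hp : p ∈ B a) (hq : q ∈ B b)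
    (hr : ∀ c ∈ K.verts, r ∈ B c → c = a) : G.HasConcentratedMinor K {p, q, r} := by
  refine ⟨_, hB.move_of_adj_eq_or hK hb ha hab.symm hq h.swap12.adj_p (G.symm _ _ h.2.2.2.1) hp
    (fun hrb => hab (hr b hb hrb).symm) (fun j hj hrj => hr j (K.support _ _ hj).2 hrj), a,
    fun i hi hia => ?_⟩
  rw [moveTo_of_ne hia, Finset.disjoint_left]
  intro x hx hxT
  obtain ⟨hxq, hxi⟩ := Finset.mem_erase.mp hx
  simp only [Finset.mem_insert, Finset.mem_singleton] at hxT
  rcases hxT with rfl | rfl | rfl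
  · exact hia (hB.eq_of_mem hi ha hxi hp)
  · exact hxq rfl
  · exact hia (hr i hi hxi)

lemma D3aConfig.hasConcentratedMinor_of_pair (h : G.D3aConfig p q r p' q' r')
    (hK : ∀ x ∈ K.verts, 3 ≤ K.degree x) (hB : G.IsMinorModel K B) {a b : ℕ}
    (ha : a ∈ K.verts) (hb : b ∈ K.verts) (hab : a ≠ b) (hp : p ∈ B a) (hq : q ∈ B b)
    (hr : ∀ c ∈ K.verts, r ∈ B c → c = a ∨ c = b) : G.HasConcentratedMinor K {p, q, r} := by
  by_cases hra : ∀ c ∈ K.verts, r ∈ B c → c = a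
  · exact h.hasConcentratedMinor_of_mem_of_mem hB (hK b hb) ha hb hab hp hq hra
  push Not at hra
  obtain ⟨c, hc, hrc, hca⟩ := hra
  have hcb := (hr c hc hrc).resolve_left hca
  have := h.swap12.hasConcentratedMinor_of_mem_of_mem hB (hK a ha) hb ha hab.symm hq hp
    fun c' hc' hrc' => hcb ▸ hB.eq_of_mem hc' hc hrc' hrc
  rwa [Finset.insert_comm] at this

lemma D3aConfig.hasConcentratedMinor_of_not_adj (h : G.D3aConfig p q r p' q' r')
    (hK : ∀ x ∈ K.verts, 3 ≤ K.degree x) (hB : G.IsMinorModel K B) {a b c : ℕ}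
    (ha : a ∈ K.verts) (hb : b ∈ K.verts) (hc : c ∈ K.verts) (hab : a ≠ b) (hac : a ≠ c)
    (hbc : b ≠ c) (hp : p ∈ B a) (hq : q ∈ B b) (hr : r ∈ B c) (hnadj : ¬ K.Adj b c) :
    G.HasConcentratedMinor K {p, q, r} := by
  have hB' := hB.move_of_adj_eq_or (hK b hb) hb ha hab.symm hq h.swap12.adj_p
    (G.symm _ _ h.2.2.2.1) hp (fun hrb => hbc (hB.eq_of_mem hb hc hrb hr))
    (fun j hj hrj => absurd (hB.eq_of_mem (K.support _ _ hj).2 hc hrj hr ▸ hj) hnadj)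
  have hrq : r ≠ q := fun e => G.loopless r (e ▸ h.2.2.2.2.1)
  have := h.swap12.rot.hasConcentratedMinor_of_mem_of_mem hB' (hK c hc) ha hc hac
    (by simp [hp]) (mem_moveTo_of_ne hr hrq) fun k _ hqk => by
      by_contra hka
      rw [moveTo_of_ne hka] at hqk
      exact Finset.notMem_erase _ _ hqk
  rwa [Finset.pair_comm] at this

lemma D3aConfig.hasConcentratedMinor_or_triangleSpread (h : G.D3aConfig p q r p' q' r')
    (hK : ∀ x ∈ K.verts, 3 ≤ K.degree x) (hB : G.IsMinorModel K B) :
    G.HasConcentratedMinor K {p, q, r} ∨ TriangleSpread B K p q r := by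
  refine or_iff_not_imp_right.mpr fun hspread => ?_
  by_cases hconc : ∃ j, ∀ i ∈ K.verts, i ≠ j → Disjoint (B i) {p, q, r}
  · exact ⟨B, hB, hconc⟩
  obtain ⟨i₁, hi₁, i₂, hi₂, hi₂₁, x, hx, hxT, y, hy, hyT⟩ := exists_ne_of_not_concentrated hconc
  have hpq : ∀ a ∈ K.verts, ∀ b ∈ K.verts, a ≠ b → p ∈ B a → q ∈ B b →
      G.HasConcentratedMinor K {p, q, r} := fun a ha b hb hab hp hq =>
    h.hasConcentratedMinor_of_pair hK hB ha hb hab hp hq fun c hc hrc => by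
      by_contra! hne
      exact hspread ⟨a, ha, b, hb, c, hc, hab, hne.1.symm, hne.2.symm, hp, hq, hrc⟩
  have hqr : ∀ a ∈ K.verts, ∀ b ∈ K.verts, a ≠ b → q ∈ B a → r ∈ B b →
      G.HasConcentratedMinor K {p, q, r} := fun a ha b hb hab hq hr => by
    have := h.rot.hasConcentratedMinor_of_pair hK hB ha hb hab hq hr fun c hc hpc => by
      by_contra! hne
      exact hspread ⟨c, hc, a, ha, b, hb, hne.1, hne.2, hab, hpc, hq, hr⟩
    rwa [Finset.pair_comm, Finset.insert_comm] at this
  have hrp : ∀ a ∈ K.verts, ∀ b ∈ K.verts, a ≠ b → r ∈ B a → p ∈ B b →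
      G.HasConcentratedMinor K {p, q, r} := fun a ha b hb hab hr hp => by
    have := h.rot.rot.hasConcentratedMinor_of_pair hK hB ha hb hab hr hp fun c hc hqc => by
      by_contra! hne
      exact hspread ⟨b, hb, c, hc, a, ha, hne.2.symm, hab.symm, hne.1, hp, hqc, hr⟩
    rwa [Finset.insert_comm, Finset.pair_comm] at this
  simp only [Finset.mem_insert, Finset.mem_singleton] at hxT hyT
  rcases hxT with rfl | rfl | rfl <;> rcases hyT with rfl | rfl | rfl
  all_goals first
    | exact absurd (hB.eq_of_mem hi₂ hi₁ hy hx) hi₂₁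
    | exact hpq _ hi₁ _ hi₂ hi₂₁.symm hx hy
    | exact hpq _ hi₂ _ hi₁ hi₂₁ hy hx
    | exact hqr _ hi₁ _ hi₂ hi₂₁.symm hx hy
    | exact hqr _ hi₂ _ hi₁ hi₂₁ hy hx
    | exact hrp _ hi₁ _ hi₂ hi₂₁.symm hx hy
    | exact hrp _ hi₂ _ hi₁ hi₂₁ hy hx

lemma D3aConfig.hasConcentratedMinor_K33 (h : G.D3aConfig p q r p' q' r')
    (hG : G.HasMinor K33Graph) : G.HasConcentratedMinor K33Graph {p, q, r} := by
  obtain ⟨B, hB⟩ := hasMinor_iff.mp hG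
  have hK : ∀ x ∈ K33Graph.verts, 3 ≤ K33Graph.degree x := fun x hx =>
    (K33Graph.degree_eq hx).ge
  rcases h.hasConcentratedMinor_or_triangleSpread hK hB with hc |
    ⟨a, ha, b, hb, c, hc, hab, hac, hbc, hp, hq, hr⟩
  · exact hc
  by_cases hbc' : K33Graph.Adj b c
  swap
  · exact h.hasConcentratedMinor_of_not_adj hK hB ha hb hc hab hac hbc hp hq hr hbc'
  by_cases hac' : K33Graph.Adj a c
  · have := h.rot.rot.hasConcentratedMinor_of_not_adj hK hB hc ha hb hac.symm hbc.symm hab hr hp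
      hq (K33Graph.not_adj_of_adj_of_adj (K33Graph.symm _ _ hac') (K33Graph.symm _ _ hbc'))
    rwa [Finset.insert_comm, Finset.pair_comm] at this
  · have := h.rot.hasConcentratedMinor_of_not_adj hK hB hb hc ha hbc hab.symm hac.symm hq hr hp
      fun hca => hac' (K33Graph.symm _ _ hca)
    rwa [Finset.pair_comm, Finset.insert_comm] at this


lemma D3aConfig.sdiff_branch_K5 (h : G.D3aConfig p q r p' q' r')
    (hB : G.IsMinorModel K5Graph B) {i : ℕ} (hi : i ∈ K5Graph.verts) (hp : p ∈ B i)
    (hq : q ∉ B i) (hr : r ∉ B i) :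
    (B i \ {p, q, r}).Nonempty ∧ G.ConnectedOn ↑(B i \ {p, q, r}) ∧
      ∀ x ∈ B i, x ∈ ({p, q, r} : Finset ℕ) → ∃ y ∈ B i \ {p, q, r}, G.Adj x y := by
  have hsing : B i ≠ {p} :=
    hB.ne_singleton_of_degree_lt (by rw [h.1, K5Graph.degree_eq hi]; norm_num)
  have hleaf : ∀ u ∈ B i, G.Adj p u → u = p' := fun u hu hpu => by
    rcases h.adj_p u hpu with rfl | rfl | rfl
    · exact absurd hu hq
    · exact absurd hu hr
    · rfl
  obtain ⟨hp'i, hp'p, hconn⟩ := hB.connectedOn_erase hi hp hsing hleaf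
  have heq : B i \ {p, q, r} = (B i).erase p := by
    ext x
    simp only [Finset.mem_sdiff, Finset.mem_insert, Finset.mem_singleton, Finset.mem_erase]
    constructor
    · rintro ⟨hx, hxT⟩
      exact ⟨fun e => hxT (Or.inl e), hx⟩
    · rintro ⟨hxp, hx⟩
      exact ⟨hx, by rintro (rfl | rfl | rfl) <;> contradiction⟩
  rw [heq]
  refine ⟨⟨p', Finset.mem_erase.mpr ⟨hp'p, hp'i⟩⟩, hconn, fun x hx hxT => ?_⟩
  simp only [Finset.mem_insert, Finset.mem_singleton] at hxT
  rcases hxT with rfl | rfl | rfl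
  · exact ⟨p', Finset.mem_erase.mpr ⟨hp'p, hp'i⟩, h.2.2.2.2.2.2.1⟩
  · exact absurd hx hq
  · exact absurd hx hr

lemma D3aConfig.exists_adj_sdiff (h : G.D3aConfig p q r p' q' r') (hB : G.IsMinorModel K B)
    {i j : ℕ} (hij : K.Adj i j) (hj : Disjoint (B j) {p, q, r})
    (hout : ∀ x ∈ B i, x ∈ ({p, q, r} : Finset ℕ) → ∃ y ∈ B i \ {p, q, r}, G.Adj x y) :
    ∃ x ∈ B i \ {p, q, r}, ∃ y ∈ B j \ {p, q, r}, G.Adj x y := by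
  obtain ⟨x, hx, y, hy, hxy⟩ := hB.exists_adj i j hij
  have hyT : y ∉ ({p, q, r} : Finset ℕ) := Finset.disjoint_left.mp hj hy
  by_cases hxT : x ∈ ({p, q, r} : Finset ℕ)
  · obtain ⟨y', hy', hxy'⟩ := hout x hx hxT
    obtain rfl := h.eq_of_adj_of_notMem hxT hxy hxy' hyT (Finset.mem_sdiff.mp hy').2
    have := hB.eq_of_mem (K.support i j hij).1 (K.support i j hij).2 (Finset.mem_sdiff.mp hy').1 hy
    exact absurd (this ▸ hij) (K.loopless j)
  · exact ⟨x, Finset.mem_sdiff.mpr ⟨hx, hxT⟩, y, Finset.mem_sdiff.mpr ⟨hy, hyT⟩, hxy⟩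

lemma IsMinorModel.disjoint_of_ne (hB : G.IsMinorModel K B) {a b c i : ℕ} (ha : a ∈ K.verts)
    (hb : b ∈ K.verts) (hc : c ∈ K.verts) (hp : p ∈ B a) (hq : q ∈ B b) (hr : r ∈ B c)
    (hi : i ∈ K.verts) (hia : i ≠ a) (hib : i ≠ b) (hic : i ≠ c) : Disjoint (B i) {p, q, r} := by
  rw [Finset.disjoint_left]
  intro x hx hxT
  simp only [Finset.mem_insert, Finset.mem_singleton] at hxT
  rcases hxT with rfl | rfl | rfl
  exacts [hia (hB.eq_of_mem hi ha hx hp), hib (hB.eq_of_mem hi hb hx hq),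
    hic (hB.eq_of_mem hi hc hx hr)]

lemma D3aConfig.sdiff_branch_K5_of_spread (h : G.D3aConfig p q r p' q' r')
    (hB : G.IsMinorModel K5Graph B) {a b c i : ℕ} (ha : a ∈ K5Graph.verts)
    (hb : b ∈ K5Graph.verts) (hc : c ∈ K5Graph.verts) (hab : a ≠ b) (hac : a ≠ c) (hbc : b ≠ c)
    (hp : p ∈ B a) (hq : q ∈ B b) (hr : r ∈ B c) (hi : i ∈ K5Graph.verts) :
    (B i \ {p, q, r}).Nonempty ∧ G.ConnectedOn ↑(B i \ {p, q, r}) ∧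
      ∀ x ∈ B i, x ∈ ({p, q, r} : Finset ℕ) → ∃ y ∈ B i \ {p, q, r}, G.Adj x y := by
  have hne : ∀ {j x}, j ∈ K5Graph.verts → x ∈ B j → j ≠ i → x ∉ B i := fun hj hx hji hxi =>
    hji (hB.eq_of_mem hj hi hx hxi)
  by_cases hia : i = a
  · subst hia
    exact h.sdiff_branch_K5 hB hi hp (hne hb hq (Ne.symm hab)) (hne hc hr (Ne.symm hac))
  by_cases hib : i = b
  · subst hib
    have := h.rot.sdiff_branch_K5 hB hi hq (hne hc hr (Ne.symm hbc)) (hne ha hp hab)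
    rwa [Finset.pair_comm, Finset.insert_comm] at this
  by_cases hic : i = c
  · subst hic
    have := h.rot.rot.sdiff_branch_K5 hB hi hr (hne ha hp hac) (hne hb hq hbc)
    rwa [Finset.insert_comm, Finset.pair_comm] at this
  have hdisj := hB.disjoint_of_ne ha hb hc hp hq hr hi hia hib hic
  rw [Finset.sdiff_eq_self_of_disjoint hdisj]
  exact ⟨hB.nonempty i hi, hB.connectedOn i hi,
    fun x hx hxT => absurd hxT (Finset.disjoint_left.mp hdisj hx)⟩

/-- Labels the vertices `k ≠ 3` of `K₃,₃` injectively by vertices of `K₅`, starting with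
`a, b, c`. -/
lemma exists_K33_labelling {a b c : ℕ} (ha : a < 5) (hb : b < 5) (hc : c < 5) (hab : a ≠ b)
    (hac : a ≠ c) (hbc : b ≠ c) : ∃ τ : ℕ → ℕ, τ 0 = a ∧ τ 1 = b ∧ τ 2 = c ∧ (∀ k, τ k < 5) ∧
      ∀ k < 6, ∀ l < 6, k ≠ 3 → l ≠ 3 → k ≠ l → τ k ≠ τ l := by
  have hsub : ({a, b, c} : Finset ℕ) ⊆ Finset.range 5 := by
    simp only [Finset.insert_subset_iff, Finset.singleton_subset_iff, Finset.mem_range]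
    exact ⟨ha, hb, hc⟩
  obtain ⟨d, e, hde, hrest⟩ := Finset.card_eq_two.mp (by
    rw [Finset.card_sdiff_of_subset hsub, Finset.card_range,
      Finset.card_eq_three.mpr ⟨a, b, c, hab, hac, hbc, rfl⟩] :
    (Finset.range 5 \ {a, b, c}).card = 2)
  have hd : d ∈ Finset.range 5 \ {a, b, c} := hrest ▸ by simp
  have he : e ∈ Finset.range 5 \ {a, b, c} := hrest ▸ by simp
  simp only [Finset.mem_sdiff, Finset.mem_range, Finset.mem_insert, Finset.mem_singleton] at hd he
  refine ⟨fun k => if k = 0 then a else if k = 1 then b else if k = 2 then c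
    else if k = 4 then d else e, by simp, by simp, by simp, fun k => ?_, ?_⟩
  · dsimp only
    split_ifs <;> omega
  · intro k hk l hl hk3 hl3 hkl
    interval_cases k <;> interval_cases l <;> simp <;> omega

/-- `K₅` with its triangle `abc` replaced by a claw from a new branch set `T` contains `K₃,₃`, with
sides `{a, b, c}` and `T` plus the two remaining vertices. -/
lemma IsMinorModel.hasConcentratedMinor_K33 (hB : G.IsMinorModel K5Graph B) {T : Finset ℕ}
    {a b c : ℕ} (ha : a ∈ K5Graph.verts) (hb : b ∈ K5Graph.verts) (hc : c ∈ K5Graph.verts)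
    (hab : a ≠ b) (hac : a ≠ c) (hbc : b ≠ c) (hT : T.Nonempty) (hTG : ↑T ⊆ (↑G.verts : Set ℕ))
    (hTconn : G.ConnectedOn ↑T)
    (hsd : ∀ i ∈ K5Graph.verts, (B i \ T).Nonempty ∧ G.ConnectedOn ↑(B i \ T))
    (hTadj : ∀ i, i = a ∨ i = b ∨ i = c → ∃ x ∈ B i \ T, ∃ y ∈ T, G.Adj x y)
    (hadj : ∀ i j, i = a ∨ i = b ∨ i = c → K5Graph.Adj i j → ¬ (j = a ∨ j = b ∨ j = c) →
      ∃ x ∈ B i \ T, ∃ y ∈ B j \ T, G.Adj x y) :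
    G.HasConcentratedMinor K33Graph T := by
  obtain ⟨τ, hτ0, hτ1, hτ2, hτ5, hτinj⟩ := exists_K33_labelling (Finset.mem_range.mp ha)
    (Finset.mem_range.mp hb) (Finset.mem_range.mp hc) hab hac hbc
  have hτv : ∀ k, τ k ∈ K5Graph.verts := fun k => Finset.mem_range.mpr (hτ5 k)
  set B' : ℕ → Finset ℕ := fun k => if k = 3 then T else B (τ k) \ T with hB'
  have hB'3 : B' 3 = T := if_pos rfl
  have hB'ne : ∀ {k}, k ≠ 3 → B' k = B (τ k) \ T := fun hk => if_neg hk
  have hside : ∀ k < 3, ∀ l, 3 ≤ l → l < 6 → ∃ x ∈ B' k, ∃ y ∈ B' l, G.Adj x y := by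
    intro k hk l hl3 hl6
    have hτk : τ k = a ∨ τ k = b ∨ τ k = c := by interval_cases k <;> simp [*]
    rw [hB'ne (by omega)]
    by_cases hl : l = 3
    · exact hl ▸ hB'3 ▸ hTadj _ hτk
    rw [hB'ne hl]
    refine hadj _ _ hτk ⟨hτinj k (by omega) l hl6 (by omega) hl (by omega), hτ5 _, hτ5 _⟩ ?_
    rw [← hτ0, ← hτ1, ← hτ2]
    rintro (he | he | he) <;> exact hτinj l hl6 _ (by norm_num) hl (by norm_num) (by omega) he
  refine ⟨B', ⟨fun k hk => ?_, fun k hk => ?_, fun k hk => ?_, fun k hk l hl hkl => ?_,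
    fun k l hkl => ?_⟩, 3, fun k _ hk => by rw [hB'ne hk]; exact Finset.sdiff_disjoint⟩
  · by_cases hk3 : k = 3
    · exact hk3 ▸ hB'3 ▸ hT
    · exact hB'ne hk3 ▸ (hsd _ (hτv k)).1
  · by_cases hk3 : k = 3
    · exact hk3 ▸ hB'3 ▸ hTG
    · rw [hB'ne hk3, Finset.coe_sdiff]
      exact Set.sdiff_subset.trans (hB.subset _ (hτv k))
  · by_cases hk3 : k = 3
    · exact hk3 ▸ hB'3 ▸ hTconn
    · exact hB'ne hk3 ▸ (hsd _ (hτv k)).2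
  · simp only [K33Graph, Finset.mem_range] at hk hl
    by_cases hk3 : k = 3
    · rw [hk3, hB'3, hB'ne (hk3 ▸ hkl).symm]
      exact Finset.disjoint_sdiff
    by_cases hl3 : l = 3
    · rw [hl3, hB'3, hB'ne hk3]
      exact Finset.sdiff_disjoint
    rw [hB'ne hk3, hB'ne hl3]
    exact (hB.disjoint _ (hτv k) _ (hτv l) (hτinj k hk l hl hk3 hl3 hkl)).mono
      Finset.sdiff_subset Finset.sdiff_subset
  · rcases hkl with ⟨hk, hl3, hl6⟩ | ⟨hl, hk3, hk6⟩
    · exact hside k hk l hl3 hl6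
    · obtain ⟨y, hy, x, hx, hyx⟩ := hside l hl k hk3 hk6
      exact ⟨x, hx, y, hy, G.symm _ _ hyx⟩

lemma D3aConfig.hasConcentratedMinor_K33_of_triangleSpread (h : G.D3aConfig p q r p' q' r')
    (hB : G.IsMinorModel K5Graph B) (hs : TriangleSpread B K5Graph p q r) :
    G.HasConcentratedMinor K33Graph {p, q, r} := by
  obtain ⟨a, ha, b, hb, c, hc, hab, hac, hbc, hp, hq, hr⟩ := hs
  have hbranch := fun {i} => h.sdiff_branch_K5_of_spread hB ha hb hc hab hac hbc hp hq hr (i := i)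
  obtain ⟨-, -, -, hpq, hqr, hpr, -⟩ := id h
  refine hB.hasConcentratedMinor_K33 ha hb hc hab hac hbc ⟨p, by simp⟩ ?_ ?_
    (fun i hi => ⟨(hbranch hi).1, (hbranch hi).2.1⟩) ?_ ?_
  · intro x hx
    simp only [Finset.coe_insert, Finset.coe_singleton, Set.mem_insert_iff,
      Set.mem_singleton_iff] at hx
    rcases hx with rfl | rfl | rfl
    exacts [hB.mem_verts ha hp, hB.mem_verts hb hq, hB.mem_verts hc hr]
  · refine connectedOn_of_pairwise_adj fun u hu v hv huv => ?_
    simp only [Finset.coe_insert, Finset.coe_singleton, Set.mem_insert_iff,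
      Set.mem_singleton_iff] at hu hv
    rcases hu with rfl | rfl | rfl <;> rcases hv with rfl | rfl | rfl <;>
      first | exact absurd rfl huv | assumption | exact G.symm _ _ ‹_›
  · rintro i (rfl | rfl | rfl)
    · obtain ⟨y, hy, hpy⟩ := (hbranch ha).2.2 p hp (by simp)
      exact ⟨y, hy, p, by simp, G.symm _ _ hpy⟩
    · obtain ⟨y, hy, hqy⟩ := (hbranch hb).2.2 q hq (by simp)
      exact ⟨y, hy, q, by simp, G.symm _ _ hqy⟩
    · obtain ⟨y, hy, hry⟩ := (hbranch hc).2.2 r hr (by simp)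
      exact ⟨y, hy, r, by simp, G.symm _ _ hry⟩
  · intro i j hi hij hj
    push Not at hj
    have hiv := (K5Graph.support i j hij).1
    have hjv := (K5Graph.support i j hij).2
    exact h.exists_adj_sdiff hB hij (hB.disjoint_of_ne ha hb hc hp hq hr hjv hj.1 hj.2.1 hj.2.2)
      (hbranch hiv).2.2

end D3a

lemma D3a.hasKuratowskiMinor (h : G.D3a H) (hG : G.HasKuratowskiMinor) :
    H.HasKuratowskiMinor := by
  obtain ⟨p, q, r, p', q', r', t, hcfg, ht, hverts, hadj⟩ := h
  have hcollapse : ∀ {K : FinGraph}, G.HasConcentratedMinor K {p, q, r} → H.HasMinor K :=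
    hcfg.hasMinor_of_hasConcentratedMinor ht hverts hadj
  rcases hG with h5 | h33
  · obtain ⟨B, hB⟩ := hasMinor_iff.mp h5
    have hK : ∀ x ∈ K5Graph.verts, 3 ≤ K5Graph.degree x := fun x hx => by
      rw [K5Graph.degree_eq hx]; norm_num
    rcases hcfg.hasConcentratedMinor_or_triangleSpread hK hB with hc | hs
    · exact Or.inl (hcollapse hc)
    · exact Or.inr (hcollapse (hcfg.hasConcentratedMinor_K33_of_triangleSpread hB hs))
  · exact Or.inr (hcollapse (hcfg.hasConcentratedMinor_K33 h33))

lemma D3Step.hasKuratowskiMinor (h : G.D3Step H) (hG : G.HasKuratowskiMinor) :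
    H.HasKuratowskiMinor :=
  h.elim (fun h => h.hasKuratowskiMinor hG) (fun h => h.hasKuratowskiMinor hG)

end FinGraph

theorem d3_reducible_planar (G : FinGraph) (h : G.D3Reducible) :
    G.Planar := by
  obtain ⟨K, hGK, hK⟩ := h
  rw [FinGraph.planar_iff_not_hasKuratowskiMinor]
  induction hGK using Relation.ReflTransGen.head_induction_on with
  | refl => exact hK.not_hasKuratowskiMinor
  | head hstep _ ih => exact fun hG => ih (hstep.hasKuratowskiMinor hG)
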